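/- arXiv:0912.4839 — 4 statements merged into one kernel-verified Lean document; each statement's English description precedes it below -/
import Mathlib

section
/- For γ > 1 and M+ = 1, the quadratic form F₂(φ,ψ,χ) := (γ-1)φ² + γ(γ-1)ψ² + χ² - 2(γ-1)(φ+χ)ψ is positive semidefinite, with kernel spanned by the vector q₁ = (1, 1, γ-1)ᵀ; its nonzero eigenvalues are ν± = (γ² ± √(γ⁴ - 4γ³ + 12γ² - 20γ + 12))/2, which are real and satisfy 0 < ν₋ < ν₊. -/
open Matrix Polynomial

/-- for the transonic case `M₊ = 1`, the quadratic form `F₂` is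
positive semidefinite with kernel spanned by `q₁ = (1,1,γ-1)`, and the matrix
`A₂` has characteristic polynomial `X (X - νm)(X - νp)` with `0 < νm < νp`. -/
theorem stmt_4 (γ : ℝ) (hγ : 1 < γ)
    (F : ℝ → ℝ → ℝ → ℝ)
    (hF : ∀ φ ψ χ, F φ ψ χ
      = (γ - 1) * φ ^ 2 + γ * (γ - 1) * ψ ^ 2 + χ ^ 2 - 2 * (γ - 1) * (φ + χ) * ψ)
    (A : Matrix (Fin 3) (Fin 3) ℝ)
    (hA : A = !![γ - 1, 1 - γ, 0; 1 - γ, γ * (γ - 1), 1 - γ; 0, 1 - γ, 1])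
    (νm νp : ℝ)
    (hνm : νm = (γ ^ 2 - Real.sqrt (γ ^ 4 - 4 * γ ^ 3 + 12 * γ ^ 2 - 20 * γ + 12)) / 2)
    (hνp : νp = (γ ^ 2 + Real.sqrt (γ ^ 4 - 4 * γ ^ 3 + 12 * γ ^ 2 - 20 * γ + 12)) / 2) :
    (∀ φ ψ χ : ℝ, 0 ≤ F φ ψ χ) ∧
    (∀ φ ψ χ : ℝ, F φ ψ χ = 0 ↔ ∃ t : ℝ, φ = t ∧ ψ = t ∧ χ = t * (γ - 1)) ∧
    A.mulVec ![1, 1, γ - 1] = 0 ∧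
    0 < νm ∧ νm < νp ∧
    A.charpoly = X * (X - C νm) * (X - C νp) := by
  have hγ0 : 0 < γ - 1 := by linarith
  set D : ℝ := γ ^ 4 - 4 * γ ^ 3 + 12 * γ ^ 2 - 20 * γ + 12 with hD
  have hDpos : 0 < D := by
    have h1 : (0:ℝ) ≤ ((γ-1)^2)^2 := sq_nonneg _
    nlinarith [sq_nonneg ((γ-1)^2), sq_nonneg (3*γ - 4)]
  have hsq : Real.sqrt D ^ 2 = D := Real.sq_sqrt hDpos.le
  have hsqpos : 0 < Real.sqrt D := Real.sqrt_pos.mpr hDpos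
  have hkey : ∀ φ ψ χ : ℝ, F φ ψ χ
      = (γ - 1) * (φ - ψ) ^ 2 + (χ - (γ - 1) * ψ) ^ 2 := by
    intro φ ψ χ; rw [hF]; ring
  have hnn : ∀ φ ψ χ : ℝ, 0 ≤ F φ ψ χ := by
    intro φ ψ χ
    rw [hkey]
    positivity
  refine ⟨hnn, ?_, ?_, ?_, ?_, ?_⟩
  · intro φ ψ χ
    constructor
    · intro h
      rw [hkey] at h
      have h1 : (γ - 1) * (φ - ψ) ^ 2 = 0 ∧ (χ - (γ - 1) * ψ) ^ 2 = 0 := by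
        constructor <;> nlinarith [sq_nonneg (φ - ψ), sq_nonneg (χ - (γ - 1) * ψ)]
      have h2 : φ = ψ := by
        have := h1.1
        have h3 : (φ - ψ) ^ 2 = 0 := by
          rcases mul_eq_zero.mp this with h | h
          · linarith
          · exact h
        have := pow_eq_zero_iff (n := 2) (by norm_num) |>.mp h3
        linarith
      have h4 : χ = ψ * (γ - 1) := by
        have h3 := pow_eq_zero_iff (n := 2) (by norm_num) |>.mp h1.2
        linarith [h3]; 
      exact ⟨ψ, h2, rfl, h4⟩
    · rintro ⟨t, rfl, rfl, rfl⟩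
      rw [hF]; ring
  · subst hA
    funext i
    fin_cases i <;>
      simp [Matrix.mulVec, dotProduct, Fin.sum_univ_three] <;> ring
  · -- 0 < νm
    rw [hνm]
    have hlt : Real.sqrt D < γ ^ 2 := by
      have hγ2 : 0 < γ ^ 2 := by positivity
      have : D < (γ ^ 2) ^ 2 := by nlinarith [sq_nonneg (γ - 1)]
      calc Real.sqrt D < Real.sqrt ((γ ^ 2) ^ 2) := by
            exact Real.sqrt_lt_sqrt hDpos.le this
        _ = γ ^ 2 := Real.sqrt_sq hγ2.le
    linarith
  · rw [hνm, hνp]; linarith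
  · -- charpoly
    have hsum : νm + νp = γ ^ 2 := by rw [hνm, hνp]; ring
    have hprod : νm * νp = γ ^ 3 - 3 * γ ^ 2 + 5 * γ - 3 := by
      rw [hνm, hνp]
      have : Real.sqrt D * Real.sqrt D = D := by nlinarith [hsq]
      field_simp
      nlinarith [this]
    have hgoal : (X : ℝ[X]) * (X - C νm) * (X - C νp)
        = X ^ 3 - C (νm + νp) * X ^ 2 + C (νm * νp) * X := by
      simp only [_root_.map_add, _root_.map_mul]; ring
    rw [hgoal, hsum, hprod]
    subst hA
    rw [Matrix.charpoly, Matrix.det_fin_three]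
    simp [Matrix.charmatrix_apply_eq, Matrix.charmatrix_apply_ne, _root_.map_sub, _root_.map_mul,
      _root_.map_one, map_ofNat, Matrix.charmatrix]
    ring
end

section
/- Let β ≥ 1, δ ∈ (0,1], and f ∈ H¹(ℝ₊) with ∫₀^∞ (1+δx)^β (f² + (f')²) dx < ∞. Then there is a constant C > 0 independent of δ and f such that ∫₀^∞ (1+δx)^{β-1} |f(x)|³ dx ≤ C δ^{-3/2} (∫₀^∞ (1+δx) f² dx)^{1/2} ( f(0)² + δ² ∫₀^∞ (1+δx)^{β-2} f² dx + ∫₀^∞ (1+δx)^β (f')² dx ). -/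
/-!
Write `w = 1 + δx`. The function `g = w^(β-1) f²` is integrable on `(0, ∞)`, so it takes
arbitrarily small values far out, and for `β ≥ 1` its derivative is at least `-2 w^(β-1) |f f'|`.
Integrating from `x` to such a point gives `g x ≤ 2K` with `K = ∫ w^(β-1) |f f'|`, and
Cauchy–Schwarz gives `K ≤ √(∫ w^(β-2) f²) √(∫ w^β f'²)`. Since
`w^(β-1) |f|³ = √g · √(w f²) · √(w^(β-2) f²)`, a second Cauchy–Schwarz bounds the cubic integral by
`√(2K) √(∫ w f²) √(∫ w^(β-2) f²)`, and AM–GM in the form `2 √(δ² I₂ I₃) ≤ δ² I₂ + I₃` turns this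
into the claim with `C = 1`.
-/

open MeasureTheory Set

section CauchySchwarz

variable {α : Type*} [MeasurableSpace α] {μ : Measure α} {a b : α → ℝ}

lemma memLp_two_sqrt (ha0 : 0 ≤ᵐ[μ] a) (ha : Integrable a μ) :
    MemLp (fun x => √(a x)) 2 μ := by
  refine (memLp_two_iff_integrable_sq
    (Real.continuous_sqrt.comp_aestronglyMeasurable ha.aestronglyMeasurable)).2 ?_
  refine ha.congr ?_
  filter_upwards [ha0] with x hx
  exact (Real.sq_sqrt hx).symm

lemma integrable_sqrt_mul_sqrt (ha0 : 0 ≤ᵐ[μ] a) (hb0 : 0 ≤ᵐ[μ] b) (ha : Integrable a μ)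
    (hb : Integrable b μ) : Integrable (fun x => √(a x) * √(b x)) μ :=
  (memLp_two_sqrt ha0 ha).integrable_mul (memLp_two_sqrt hb0 hb)

lemma integral_sqrt_mul_sqrt_le (ha0 : 0 ≤ᵐ[μ] a) (hb0 : 0 ≤ᵐ[μ] b) (ha : Integrable a μ)
    (hb : Integrable b μ) :
    ∫ x, √(a x) * √(b x) ∂μ ≤ √(∫ x, a x ∂μ) * √(∫ x, b x ∂μ) := by
  have key := integral_mul_le_Lp_mul_Lq_of_nonneg Real.HolderConjugate.two_two
    (ae_of_all _ fun x => Real.sqrt_nonneg (a x))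
    (ae_of_all _ fun x => Real.sqrt_nonneg (b x))
    (by simpa using memLp_two_sqrt ha0 ha) (by simpa using memLp_two_sqrt hb0 hb)
  have hsq : ∀ {c : α → ℝ}, 0 ≤ᵐ[μ] c → ∫ x, √(c x) ^ (2 : ℝ) ∂μ = ∫ x, c x ∂μ := fun hc0 =>
    integral_congr_ae (by filter_upwards [hc0] with x hx; simp [Real.sq_sqrt hx])
  rwa [hsq ha0, hsq hb0, ← Real.sqrt_eq_rpow, ← Real.sqrt_eq_rpow] at key

end CauchySchwarz

lemma exists_gt_lt_of_integrableOn_Ioi {g : ℝ → ℝ} {x ε : ℝ} (hg : IntegrableOn g (Ioi x))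
    (hε : 0 < ε) : ∃ y > x, g y < ε := by
  by_contra! hge
  have hconst : IntegrableOn (fun _ => ε) (Ioi x) :=
    hg.mono' aestronglyMeasurable_const <| (ae_restrict_mem measurableSet_Ioi).mono
      fun y hy => by rw [Real.norm_of_nonneg hε.le]; exact hge y hy
  simp [integrableOn_const_iff, hε.ne'] at hconst

lemma le_integral_of_neg_le_deriv {g g' h : ℝ → ℝ} {a x : ℝ}
    (hderiv : ∀ t ∈ Ici a, HasDerivAt g (g' t) t) (hg : IntegrableOn g (Ioi a))
    (hh : IntegrableOn h (Ioi a)) (hh0 : ∀ t ∈ Ioi a, 0 ≤ h t)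
    (hg' : ∀ t ∈ Ioi a, -h t ≤ g' t) (hx : a ≤ x) :
    g x ≤ ∫ t in Ioi a, h t := by
  refine le_of_forall_pos_le_add fun ε hε => ?_
  obtain ⟨y, hxy, hy⟩ := exists_gt_lt_of_integrableOn_Ioi (hg.mono_set (Ioi_subset_Ioi hx)) hε
  have hIoc : Ioc x y ⊆ Ioi a := Ioc_subset_Ioi_self.trans (Ioi_subset_Ioi hx)
  have hftc : ∫ t in x..y, -h t ≤ g y - g x :=
    intervalIntegral.integral_le_sub_of_hasDeriv_right_of_le hxy.le
      (fun t ht => (hderiv t (hx.trans ht.1)).continuousAt.continuousWithinAt)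
      (fun t ht => (hderiv t (hx.trans ht.1.le)).hasDerivWithinAt)
      ((integrableOn_Icc_iff_integrableOn_Ioc (by simp)).2 (hh.mono_set hIoc).neg)
      fun t ht => hg' t (hx.trans_lt ht.1)
  have hmono : ∫ t in Ioc x y, h t ≤ ∫ t in Ioi a, h t :=
    setIntegral_mono_set hh (ae_restrict_of_forall_mem measurableSet_Ioi hh0)
      hIoc.eventuallyLE
  rw [intervalIntegral.integral_neg, intervalIntegral.integral_of_le hxy.le] at hftc
  linarith

lemma sqrt_rpow_mul_sq {W : ℝ} (hW : 0 < W) (p u : ℝ) :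
    √(W ^ p * u ^ 2) = W ^ (p / 2) * |u| := by
  rw [Real.sqrt_mul (Real.rpow_nonneg hW.le p), Real.sqrt_sq_eq_abs, Real.sqrt_eq_rpow,
    ← Real.rpow_mul hW.le]
  ring_nf

lemma rpow_mul_abs_mul_eq {W : ℝ} (hW : 0 < W) (β u v : ℝ) :
    W ^ (β - 1) * |u * v| = √(W ^ (β - 2) * u ^ 2) * √(W ^ β * v ^ 2) := by
  rw [sqrt_rpow_mul_sq hW, sqrt_rpow_mul_sq hW, abs_mul,
    show β - 1 = (β - 2) / 2 + β / 2 by ring, Real.rpow_add hW]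
  ring

lemma rpow_mul_abs_pow_three_eq {W : ℝ} (hW : 0 < W) (β u : ℝ) :
    W ^ (β - 1) * |u| ^ 3 =
      √(W ^ (β - 1) * u ^ 2) * (√(W * u ^ 2) * √(W ^ (β - 2) * u ^ 2)) := by
  have hW1 : √(W * u ^ 2) = W ^ (1 / 2 : ℝ) * |u| := by
    simpa using sqrt_rpow_mul_sq hW 1 u
  have hexp : W ^ ((β - 1) / 2) * (W ^ (1 / 2 : ℝ) * W ^ ((β - 2) / 2)) = W ^ (β - 1) := by
    rw [← Real.rpow_add hW, ← Real.rpow_add hW]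
    ring_nf
  rw [hW1, sqrt_rpow_mul_sq hW, sqrt_rpow_mul_sq hW, ← hexp]
  ring

lemma sqrt_two_mul_mul_sqrt_le {δ F X Y K : ℝ} (hδ : 0 < δ) (hF : 0 ≤ F) (hX : 0 ≤ X)
    (hY : 0 ≤ Y) (hK : K ≤ √X * √Y) :
    √(2 * K) * √X ≤ δ ^ (-(3 / 2 : ℝ)) * (F + δ ^ 2 * X + Y) := by
  obtain ⟨p, hp, rfl⟩ : ∃ p, 0 ≤ p ∧ p ^ 2 = X := ⟨√X, Real.sqrt_nonneg X, Real.sq_sqrt hX⟩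
  obtain ⟨q, hq, rfl⟩ : ∃ q, 0 ≤ q ∧ q ^ 2 = Y := ⟨√Y, Real.sqrt_nonneg Y, Real.sq_sqrt hY⟩
  rw [Real.sqrt_sq hp, Real.sqrt_sq hq] at hK
  have hpow : δ ^ (-(3 / 2 : ℝ)) = (δ * √δ)⁻¹ := by
    rw [Real.rpow_neg hδ.le, Real.sqrt_eq_rpow, ← Real.rpow_one_add' hδ.le (by norm_num)]
    norm_num
  have hsq : (δ * √δ * (√(2 * (p * q)) * p)) ^ 2 = 2 * δ ^ 3 * p ^ 3 * q := by
    rw [mul_pow, mul_pow, mul_pow, Real.sq_sqrt hδ.le, Real.sq_sqrt (by positivity)]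
    ring
  have hamgm : 2 * δ ^ 3 * p ^ 3 * q ≤ (F + δ ^ 2 * p ^ 2 + q ^ 2) ^ 2 := by
    nlinarith [sq_nonneg (δ * p - q), mul_nonneg hδ.le (mul_nonneg hp hq),
      mul_nonneg (mul_nonneg hδ.le (mul_nonneg hp hq)) (sq_nonneg (δ * p - q))]
  calc √(2 * K) * √(p ^ 2) ≤ √(2 * (p * q)) * p := by rw [Real.sqrt_sq hp]; gcongr
    _ ≤ δ ^ (-(3 / 2 : ℝ)) * (F + δ ^ 2 * p ^ 2 + q ^ 2) := by
      rw [hpow, le_inv_mul_iff₀ (by positivity), ← pow_le_pow_iff_left₀ (by positivity)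
        (by positivity) two_ne_zero, hsq]
      exact hamgm

section Weighted

variable {β δ : ℝ} {f f' : ℝ → ℝ}

lemma weight_rpow_mul_sq_ae_nonneg (hδ : 0 ≤ δ) (p : ℝ) (u : ℝ → ℝ) :
    0 ≤ᵐ[volume.restrict (Ioi 0)] fun x => (1 + δ * x) ^ p * u x ^ 2 :=
  ae_restrict_of_forall_mem measurableSet_Ioi fun x (hx : 0 < x) => by positivity

lemma integrableOn_weight_rpow_mul_sq (hδ : 0 ≤ δ) (hf : ContinuousOn f (Ioi 0)) {p : ℝ}
    (hp : p ≤ β)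
    (hI : IntegrableOn (fun x => (1 + δ * x) ^ β * (f x ^ 2 + f' x ^ 2)) (Ioi 0)) :
    IntegrableOn (fun x => (1 + δ * x) ^ p * f x ^ 2) (Ioi 0) := by
  refine hI.mono' (ContinuousOn.aestronglyMeasurable ?_ measurableSet_Ioi)
    (ae_restrict_of_forall_mem measurableSet_Ioi fun x (hx : 0 < x) => ?_)
  · exact (ContinuousOn.rpow_const (by fun_prop)
      fun x (hx : 0 < x) => Or.inl (by positivity)).mul (hf.pow 2)
  · have hwp : (1 + δ * x) ^ p ≤ (1 + δ * x) ^ β :=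
      Real.rpow_le_rpow_of_exponent_le (le_add_of_nonneg_right (by positivity)) hp
    rw [Real.norm_of_nonneg (by positivity)]
    nlinarith [sq_nonneg (f x), sq_nonneg (f' x), (by positivity : 0 ≤ (1 + δ * x) ^ p)]

lemma integrableOn_weight_rpow_mul_deriv_sq (hδ : 0 ≤ δ) (hf : ContinuousOn f (Ioi 0))
    (hI : IntegrableOn (fun x => (1 + δ * x) ^ β * (f x ^ 2 + f' x ^ 2)) (Ioi 0)) :
    IntegrableOn (fun x => (1 + δ * x) ^ β * f' x ^ 2) (Ioi 0) :=
  (hI.sub (integrableOn_weight_rpow_mul_sq hδ hf le_rfl hI)).congr_fun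
    (fun x _ => by simp only [Pi.sub_apply]; ring) measurableSet_Ioi

lemma weight_rpow_mul_abs_mul_eqOn (hδ : 0 ≤ δ) :
    EqOn (fun x => (1 + δ * x) ^ (β - 1) * |f x * f' x|)
      (fun x => √((1 + δ * x) ^ (β - 2) * f x ^ 2) * √((1 + δ * x) ^ β * f' x ^ 2)) (Ioi 0) :=
  fun x (hx : 0 < x) => rpow_mul_abs_mul_eq (by positivity) β _ _

lemma integrableOn_weight_rpow_mul_abs_mul (hδ : 0 ≤ δ) (hf : ContinuousOn f (Ioi 0))
    (hI : IntegrableOn (fun x => (1 + δ * x) ^ β * (f x ^ 2 + f' x ^ 2)) (Ioi 0))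
    (hI₂ : IntegrableOn (fun x => (1 + δ * x) ^ (β - 2) * f x ^ 2) (Ioi 0)) :
    IntegrableOn (fun x => (1 + δ * x) ^ (β - 1) * |f x * f' x|) (Ioi 0) :=
  IntegrableOn.congr_fun
    (integrable_sqrt_mul_sqrt (weight_rpow_mul_sq_ae_nonneg hδ _ _)
      (weight_rpow_mul_sq_ae_nonneg hδ _ _) hI₂ (integrableOn_weight_rpow_mul_deriv_sq hδ hf hI))
    (weight_rpow_mul_abs_mul_eqOn hδ).symm measurableSet_Ioi

lemma integral_weight_rpow_mul_abs_mul_le (hδ : 0 ≤ δ) (hf : ContinuousOn f (Ioi 0))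
    (hI : IntegrableOn (fun x => (1 + δ * x) ^ β * (f x ^ 2 + f' x ^ 2)) (Ioi 0))
    (hI₂ : IntegrableOn (fun x => (1 + δ * x) ^ (β - 2) * f x ^ 2) (Ioi 0)) :
    ∫ x in Ioi 0, (1 + δ * x) ^ (β - 1) * |f x * f' x| ≤
      √(∫ x in Ioi 0, (1 + δ * x) ^ (β - 2) * f x ^ 2) *
        √(∫ x in Ioi 0, (1 + δ * x) ^ β * f' x ^ 2) :=
  (setIntegral_congr_fun measurableSet_Ioi (weight_rpow_mul_abs_mul_eqOn hδ)).trans_le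
    (integral_sqrt_mul_sqrt_le (weight_rpow_mul_sq_ae_nonneg hδ _ _)
      (weight_rpow_mul_sq_ae_nonneg hδ _ _) hI₂ (integrableOn_weight_rpow_mul_deriv_sq hδ hf hI))

lemma hasDerivAt_weight_rpow_mul_sq {x : ℝ} (hw : 0 < 1 + δ * x)
    (hf : HasDerivAt f (f' x) x) :
    HasDerivAt (fun y => (1 + δ * y) ^ (β - 1) * f y ^ 2)
      (δ * (β - 1) * (1 + δ * x) ^ (β - 2) * f x ^ 2 + (1 + δ * x) ^ (β - 1) * (2 * f x * f' x))
      x := by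
  have hlin : HasDerivAt (fun y => 1 + δ * y) δ x := by
    simpa using ((hasDerivAt_id x).const_mul δ).const_add 1
  refine ((hlin.rpow_const (p := β - 1) (Or.inl hw.ne')).mul (hf.pow 2)).congr_deriv ?_
  rw [show β - 1 - 1 = β - 2 by ring, Pi.pow_apply]
  push_cast
  ring

lemma weight_rpow_mul_sq_le_two_mul_integral (hβ : 1 ≤ β) (hδ : 0 ≤ δ)
    (hder : ∀ x ∈ Ici 0, HasDerivAt f (f' x) x)
    (hI : IntegrableOn (fun x => (1 + δ * x) ^ β * (f x ^ 2 + f' x ^ 2)) (Ioi 0))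
    (hI₂ : IntegrableOn (fun x => (1 + δ * x) ^ (β - 2) * f x ^ 2) (Ioi 0)) {x : ℝ}
    (hx : 0 ≤ x) :
    (1 + δ * x) ^ (β - 1) * f x ^ 2 ≤ 2 * ∫ t in Ioi 0, (1 + δ * t) ^ (β - 1) * |f t * f' t| := by
  have hf : ContinuousOn f (Ioi 0) := fun t ht =>
    (hder t (Ioi_subset_Ici_self ht)).continuousAt.continuousWithinAt
  rw [← integral_const_mul]
  refine le_integral_of_neg_le_deriv (g := fun t => (1 + δ * t) ^ (β - 1) * f t ^ 2)
    (fun t (ht : 0 ≤ t) => hasDerivAt_weight_rpow_mul_sq (by positivity) (hder t ht))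
    (integrableOn_weight_rpow_mul_sq hδ hf (by linarith) hI)
    ((integrableOn_weight_rpow_mul_abs_mul hδ hf hI hI₂).const_mul 2)
    (fun t (ht : 0 < t) => by positivity) (fun t (ht : 0 < t) => ?_) hx
  have hβ1 : 0 ≤ β - 1 := sub_nonneg.2 hβ
  have hw1 : 0 ≤ (1 + δ * t) ^ (β - 1) := by positivity
  have hw2 : 0 ≤ δ * (β - 1) * (1 + δ * t) ^ (β - 2) * f t ^ 2 := by positivity
  nlinarith [mul_le_mul_of_nonneg_left (neg_abs_le (f t * f' t)) hw1]

lemma integral_weight_rpow_mul_abs_pow_three_le (hβ : 1 ≤ β) (hδ : 0 ≤ δ)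
    (hder : ∀ x ∈ Ici 0, HasDerivAt f (f' x) x)
    (hI : IntegrableOn (fun x => (1 + δ * x) ^ β * (f x ^ 2 + f' x ^ 2)) (Ioi 0))
    (hI₃ : IntegrableOn (fun x => (1 + δ * x) ^ (β - 1) * |f x| ^ 3) (Ioi 0))
    (hI₂ : IntegrableOn (fun x => (1 + δ * x) ^ (β - 2) * f x ^ 2) (Ioi 0))
    (hI₁ : IntegrableOn (fun x => (1 + δ * x) * f x ^ 2) (Ioi 0)) :
    ∫ x in Ioi 0, (1 + δ * x) ^ (β - 1) * |f x| ^ 3 ≤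
      √(2 * ∫ x in Ioi 0, (1 + δ * x) ^ (β - 1) * |f x * f' x|) *
        (√(∫ x in Ioi 0, (1 + δ * x) * f x ^ 2) *
          √(∫ x in Ioi 0, (1 + δ * x) ^ (β - 2) * f x ^ 2)) := by
  set K := ∫ x in Ioi 0, (1 + δ * x) ^ (β - 1) * |f x * f' x|
  have hnn₁ : 0 ≤ᵐ[volume.restrict (Ioi 0)] fun x => (1 + δ * x) * f x ^ 2 :=
    ae_restrict_of_forall_mem measurableSet_Ioi fun x (hx : 0 < x) => by positivity
  have hnn₂ := weight_rpow_mul_sq_ae_nonneg hδ (β - 2) f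
  have hpointwise : ∀ x ∈ Ioi (0 : ℝ), (1 + δ * x) ^ (β - 1) * |f x| ^ 3 ≤
      √(2 * K) * (√((1 + δ * x) * f x ^ 2) * √((1 + δ * x) ^ (β - 2) * f x ^ 2)) := by
    intro x (hx : 0 < x)
    rw [rpow_mul_abs_pow_three_eq (by positivity)]
    exact mul_le_mul_of_nonneg_right (Real.sqrt_le_sqrt
      (weight_rpow_mul_sq_le_two_mul_integral hβ hδ hder hI hI₂ hx.le)) (by positivity)
  calc ∫ x in Ioi 0, (1 + δ * x) ^ (β - 1) * |f x| ^ 3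
      ≤ ∫ x in Ioi 0, √(2 * K) *
          (√((1 + δ * x) * f x ^ 2) * √((1 + δ * x) ^ (β - 2) * f x ^ 2)) :=
        setIntegral_mono_on hI₃ ((integrable_sqrt_mul_sqrt hnn₁ hnn₂ hI₁ hI₂).const_mul _)
          measurableSet_Ioi hpointwise
    _ ≤ _ := by
        rw [integral_const_mul]
        gcongr
        exact integral_sqrt_mul_sqrt_le hnn₁ hnn₂ hI₁ hI₂

end Weighted

/-- weighted interpolation inequality (Lemma 5.3) controlling the
cubic weighted integral, with a constant independent of `δ` and `f`. -/
theorem stmt_8 :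
    ∃ C : ℝ, 0 < C ∧ ∀ (β δ : ℝ) (f f' : ℝ → ℝ),
      1 ≤ β → 0 < δ → δ ≤ 1 →
      (∀ x ∈ Ici (0 : ℝ), HasDerivAt f (f' x) x) →
      IntegrableOn (fun x => (1 + δ * x) ^ β * ((f x) ^ 2 + (f' x) ^ 2)) (Ioi 0) →
      IntegrableOn (fun x => (1 + δ * x) ^ (β - 1) * |f x| ^ 3) (Ioi 0) →
      IntegrableOn (fun x => (1 + δ * x) ^ (β - 2) * (f x) ^ 2) (Ioi 0) →
      IntegrableOn (fun x => (1 + δ * x) * (f x) ^ 2) (Ioi 0) →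
      ∫ x in Ioi (0 : ℝ), (1 + δ * x) ^ (β - 1) * |f x| ^ 3 ≤
        C * δ ^ (-(3 / 2 : ℝ)) *
          Real.sqrt (∫ x in Ioi (0 : ℝ), (1 + δ * x) * (f x) ^ 2) *
          ((f 0) ^ 2 + δ ^ 2 * (∫ x in Ioi (0 : ℝ), (1 + δ * x) ^ (β - 2) * (f x) ^ 2)
            + ∫ x in Ioi (0 : ℝ), (1 + δ * x) ^ β * (f' x) ^ 2) := by
  refine ⟨1, one_pos, fun β δ f f' hβ hδ _ hder hI hI₃ hI₂ hI₁ => ?_⟩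
  have hf : ContinuousOn f (Ioi 0) := fun x hx =>
    (hder x (Ioi_subset_Ici_self hx)).continuousAt.continuousWithinAt
  have hcube := integral_weight_rpow_mul_abs_pow_three_le hβ hδ.le hder hI hI₃ hI₂ hI₁
  have hinterp := sqrt_two_mul_mul_sqrt_le hδ (sq_nonneg (f 0))
    (integral_nonneg_of_ae (weight_rpow_mul_sq_ae_nonneg hδ.le _ _))
    (integral_nonneg_of_ae (weight_rpow_mul_sq_ae_nonneg hδ.le _ _))
    (integral_weight_rpow_mul_abs_mul_le hδ.le hf hI hI₂)
  linarith [mul_le_mul_of_nonneg_left hinterp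
    (Real.sqrt_nonneg (∫ x in Ioi 0, (1 + δ * x) * f x ^ 2))]
end

section
/- Let K > 0 and consider a C¹ solution z : [0,∞) → ℝ of the ODE z' = -K z² + R(z) with |R(z)| ≤ M|z|³, with initial value z(0) = δ > 0 sufficiently small. Then z(x) > 0 for all x ≥ 0 and there exist constants 0 < c ≤ C (depending on K, M) such that c δ/(1+δx) ≤ z(x) ≤ C δ/(1+δx) for all x ≥ 0. Moreover |z'(x)| ≤ C δ²/(1+δx)². -/
/-!
Once `M δ ≤ K / 2`, the field `-K u² + R u` lies between `-(3K/2) u²` and `-(K/2) u²` for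
`0 ≤ u ≤ δ`. The profiles `δ / (1 + κ δ x)` solve `u' = -κ u²`, so for `κ = K/4` and `κ = 2K`
they are strict upper and lower barriers: where `z` touches one of them, it moves strictly back
inside. Hence `z` is trapped between two profiles, both comparable to `δ / (1 + δ x)`, and
`|z'| ≤ (3K/2) z²` gives the bound on the derivative.
-/

open Set

section QuadraticField

variable {K M δ : ℝ}

theorem quadratic_field_bounds (hM : 0 ≤ M) (hMδ : M * δ ≤ K / 2) {u r : ℝ} (hu : 0 ≤ u)
    (huδ : u ≤ δ) (hr : |r| ≤ M * |u| ^ 3) :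
    -(3 * K / 2) * u ^ 2 ≤ -K * u ^ 2 + r ∧ -K * u ^ 2 + r ≤ -(K / 2) * u ^ 2 := by
  have hcubic : M * |u| ^ 3 ≤ K / 2 * u ^ 2 :=
    calc M * |u| ^ 3 = M * u * u ^ 2 := by rw [abs_of_nonneg hu]; ring
      _ ≤ M * δ * u ^ 2 := by gcongr
      _ ≤ K / 2 * u ^ 2 := by gcongr
  obtain ⟨hr_lower, hr_upper⟩ := abs_le.1 (hr.trans hcubic)
  constructor <;> linarith

theorem abs_quadratic_field_le (hM : 0 ≤ M) (hMδ : M * δ ≤ K / 2) {u r : ℝ}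
    (hu : 0 ≤ u) (huδ : u ≤ δ) (hr : |r| ≤ M * |u| ^ 3) :
    |-K * u ^ 2 + r| ≤ 3 * K / 2 * u ^ 2 := by
  obtain ⟨hlower, hupper⟩ := quadratic_field_bounds hM hMδ hu huδ hr
  exact abs_le.2 ⟨by linarith, by nlinarith [sq_nonneg u]⟩

end QuadraticField

section Profile

theorem hasDerivAt_div_one_add_mul (κ δ x : ℝ) (hx : 1 + κ * (δ * x) ≠ 0) :
    HasDerivAt (fun t => δ / (1 + κ * (δ * t))) (-κ * (δ / (1 + κ * (δ * x))) ^ 2) x := by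
  have h := (hasDerivAt_const x δ).div
    ((((hasDerivAt_id' x).const_mul δ).const_mul κ).const_add 1) hx
  refine h.congr_deriv ?_
  field_simp
  ring

variable {κ δ x : ℝ}

theorem hasDerivAt_div_one_add_mul_of_nonneg (hκ : 0 ≤ κ) (hδ : 0 < δ) (hx : 0 ≤ x) :
    HasDerivAt (fun t => δ / (1 + κ * (δ * t))) (-κ * (δ / (1 + κ * (δ * x))) ^ 2) x :=
  hasDerivAt_div_one_add_mul κ δ x (by positivity)

theorem div_one_add_mul_pos (hκ : 0 ≤ κ) (hδ : 0 < δ) (hx : 0 ≤ x) :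
    0 < δ / (1 + κ * (δ * x)) := by positivity

theorem div_one_add_mul_le_self (hκ : 0 ≤ κ) (hδ : 0 ≤ δ) (hx : 0 ≤ x) :
    δ / (1 + κ * (δ * x)) ≤ δ :=
  div_le_self hδ (le_add_of_nonneg_right (by positivity))

theorem div_one_add_mul_le_inv_min_mul {a t : ℝ} (hκ : 0 < κ) (ha : 0 ≤ a) (ht : 0 ≤ t) :
    a / (1 + κ * t) ≤ (min 1 κ)⁻¹ * a / (1 + t) := by
  have hm : 0 < min 1 κ := lt_min one_pos hκ
  calc a / (1 + κ * t) ≤ a / (min 1 κ * (1 + t)) :=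
        div_le_div_of_nonneg_left ha (by positivity)
          (by nlinarith [min_le_left 1 κ, min_le_right 1 κ])
    _ = (min 1 κ)⁻¹ * a / (1 + t) := by field_simp

theorem inv_max_mul_le_div_one_add_mul {a t : ℝ} (hκ : 0 < κ) (ha : 0 ≤ a) (ht : 0 ≤ t) :
    (max 1 κ)⁻¹ * a / (1 + t) ≤ a / (1 + κ * t) := by
  calc (max 1 κ)⁻¹ * a / (1 + t) = a / (max 1 κ * (1 + t)) := by field_simp
    _ ≤ a / (1 + κ * t) :=
        div_le_div_of_nonneg_left ha (by positivity)
          (by nlinarith [le_max_left 1 κ, le_max_right 1 κ])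

end Profile

theorem le_of_hasDerivAt_of_boundary {f f' B B' : ℝ → ℝ}
    (hf : ∀ x ∈ Ici (0 : ℝ), HasDerivAt f (f' x) x) (hB : ∀ x ∈ Ici (0 : ℝ), HasDerivAt B (B' x) x)
    (h₀ : f 0 ≤ B 0) (bound : ∀ x ∈ Ici (0 : ℝ), f x = B x → f' x < B' x) :
    ∀ x ∈ Ici (0 : ℝ), f x ≤ B x := by
  intro x hx
  have hIcc : Icc 0 x ⊆ Ici 0 := Icc_subset_Ici_self
  have hIco : Ico 0 x ⊆ Ici 0 := Ico_subset_Ici_self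
  exact image_le_of_deriv_right_lt_deriv_boundary'
    (fun y hy => (hf y (hIcc hy)).continuousAt.continuousWithinAt)
    (fun y hy => (hf y (hIco hy)).hasDerivWithinAt) h₀
    (fun y hy => (hB y (hIcc hy)).continuousAt.continuousWithinAt)
    (fun y hy => (hB y (hIco hy)).hasDerivWithinAt)
    (fun y hy => bound y (hIco hy)) ⟨hx, le_rfl⟩

section Solution

variable {K M δ : ℝ} {z R : ℝ → ℝ} (hK : 0 < K) (hM : 0 ≤ M) (hδ : 0 < δ)
  (hMδ : M * δ ≤ K / 2) (hz₀ : z 0 = δ) (hR : ∀ y, |R y| ≤ M * |y| ^ 3)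
  (hz : ∀ x ∈ Ici (0 : ℝ), HasDerivAt z (-K * z x ^ 2 + R (z x)) x)
include hK hM hδ hMδ hz₀ hR hz

theorem le_div_one_add_mul_of_solution : ∀ x ∈ Ici (0 : ℝ), z x ≤ δ / (1 + K / 4 * (δ * x)) := by
  refine le_of_hasDerivAt_of_boundary hz
    (fun x hx => hasDerivAt_div_one_add_mul_of_nonneg (by positivity) hδ hx) (by simp [hz₀]) ?_
  intro x hx hzx
  have hpos : 0 < z x := hzx ▸ div_one_add_mul_pos (by positivity) hδ hx
  have hle : z x ≤ δ := hzx ▸ div_one_add_mul_le_self (by positivity) hδ.le hx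
  rw [← hzx]
  have := (quadratic_field_bounds hM hMδ hpos.le hle (hR (z x))).2
  nlinarith [pow_pos hpos 2]

theorem div_one_add_mul_le_of_solution : ∀ x ∈ Ici (0 : ℝ), δ / (1 + 2 * K * (δ * x)) ≤ z x := by
  have hneg := le_of_hasDerivAt_of_boundary (fun x hx => (hz x hx).neg)
    (fun x hx => (hasDerivAt_div_one_add_mul_of_nonneg (by positivity : 0 ≤ 2 * K) hδ hx).neg)
    (by simp [hz₀]) ?_
  · exact fun x hx => neg_le_neg_iff.1 (hneg x hx)
  intro x hx hzx
  replace hzx : z x = δ / (1 + 2 * K * (δ * x)) := neg_inj.1 hzx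
  have hpos : 0 < z x := hzx ▸ div_one_add_mul_pos (by positivity) hδ hx
  have hle : z x ≤ δ := hzx ▸ div_one_add_mul_le_self (by positivity) hδ.le hx
  rw [← hzx]
  have := (quadratic_field_bounds hM hMδ hpos.le hle (hR (z x))).1
  nlinarith [pow_pos hpos 2]

end Solution

/-- algebraic decay of small positive solutions to
`z' = -K z² + R(z)` with `|R(z)| ≤ M |z|³`. -/
theorem stmt_10 (K M : ℝ) (hK : 0 < K) (hM : 0 ≤ M) :
    ∃ δ₀ c C : ℝ, 0 < δ₀ ∧ 0 < c ∧ c ≤ C ∧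
      ∀ (δ : ℝ) (z R : ℝ → ℝ), 0 < δ → δ ≤ δ₀ →
        z 0 = δ →
        (∀ y : ℝ, |R y| ≤ M * |y| ^ 3) →
        (∀ x ∈ Set.Ici (0 : ℝ), HasDerivAt z (-K * (z x) ^ 2 + R (z x)) x) →
        ∀ x ∈ Set.Ici (0 : ℝ),
          0 < z x ∧
          c * δ / (1 + δ * x) ≤ z x ∧
          z x ≤ C * δ / (1 + δ * x) ∧
          |(-K * (z x) ^ 2 + R (z x))| ≤ C * δ ^ 2 / (1 + δ * x) ^ 2 := by
  set C₁ := (min 1 (K / 4))⁻¹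
  have hC₁ : 1 ≤ C₁ := (one_le_inv₀ (by positivity)).2 (min_le_left _ _)
  refine ⟨K / (2 * M + 2), (max 1 (2 * K))⁻¹, max C₁ (3 * K / 2 * C₁ ^ 2), by positivity,
    by positivity, (inv_le_one_of_one_le₀ (le_max_left _ _)).trans (hC₁.trans (le_max_left _ _)),
    fun δ z R hδ hδ₀ hz₀ hR hz x hx => ?_⟩
  have hMδ : M * δ ≤ K / 2 := by
    rw [le_div_iff₀ (by positivity)] at hδ₀
    nlinarith
  have hδx : 0 ≤ δ * x := mul_nonneg hδ.le hx
  have hupper := le_div_one_add_mul_of_solution hK hM hδ hMδ hz₀ hR hz x hx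
  have hlower := div_one_add_mul_le_of_solution hK hM hδ hMδ hz₀ hR hz x hx
  have hzC₁ : z x ≤ C₁ * δ / (1 + δ * x) :=
    hupper.trans (div_one_add_mul_le_inv_min_mul (by positivity) hδ.le hδx)
  have hzpos : 0 < z x := (div_one_add_mul_pos (by positivity) hδ hx).trans_le hlower
  refine ⟨hzpos, (inv_max_mul_le_div_one_add_mul (by positivity) hδ.le hδx).trans hlower,
    hzC₁.trans (by gcongr; exact le_max_left _ _), ?_⟩
  calc |-K * z x ^ 2 + R (z x)| ≤ 3 * K / 2 * z x ^ 2 :=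
        abs_quadratic_field_le hM hMδ hzpos.le
          (hupper.trans (div_one_add_mul_le_self (by positivity) hδ.le hx)) (hR (z x))
    _ ≤ 3 * K / 2 * (C₁ * δ / (1 + δ * x)) ^ 2 := by gcongr
    _ = 3 * K / 2 * C₁ ^ 2 * δ ^ 2 / (1 + δ * x) ^ 2 := by rw [div_pow]; ring
    _ ≤ max C₁ (3 * K / 2 * C₁ ^ 2) * δ ^ 2 / (1 + δ * x) ^ 2 := by gcongr; exact le_max_right _ _
end

section
/- Let γ > 1, P_r > 0 with P_r + γ - 1 > 0. If P_r = 2, then the local center manifold in original coordinates θ = h̃^c(u) has the expansion h̃^c(u) = 1 + (γ-1)(u+1) - (γ(γ-1)/(P_r + γ - 1))(u+1)³ + O(|u+1|⁴), i.e. its quadratic coefficient in (u+1) vanishes and its cubic coefficient is -γ(γ-1)/(P_r+γ-1) < 0. (The general quadratic coefficient is γ(γ-1)(P_r-2)/(2(P_r+γ-1)).) -/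
open Asymptotics Filter Topology

/-! In the diagonal coordinates the manifold is `Θ = hᶜ(U)`, and for `P_r = 2`, i.e.
`μ = 2κ(γ-1)` and `d = κ(γ-1)(γ+1)`, the change of variables reads `U = -(u+1) - κ(γ-1) Θ`.
As `Θ = O(U³)`, this forces `U = -(u+1) + O((u+1)³)`, hence `Θ = -c₃ (u+1)³ + O((u+1)⁴)`.
Going back, `θ - 1 = (γ-1)(u+1) + d Θ` and `d c₃ = γ(γ-1)/(γ+1)`. -/

section CubicGerm

variable {α 𝕜 : Type*} [NormedField 𝕜] {l : Filter α}

theorem isBigO_pow_three_of_sub_mul_pow_three {h : 𝕜 → 𝕜} {c : 𝕜}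
    (hexp : (fun U => h U - c * U ^ 3) =O[𝓝 0] fun U => U ^ 4) :
    h =O[𝓝 0] fun U => U ^ 3 :=
  ((hexp.trans (isLittleO_pow_pow (by norm_num : 3 < 4)).isBigO).add
    ((isBigO_refl _ _).const_mul_left c)).congr_left fun U => by ring

theorem isBigO_pow_three_add_pow_three {U x : α → 𝕜} (hx : Tendsto x l (𝓝 0))
    (hU : U =O[l] x) (hsum : (fun t => U t + x t) =O[l] fun t => x t ^ 3) :
    (fun t => U t ^ 3 + x t ^ 3) =O[l] fun t => x t ^ 4 := by
  have hquad : (fun t => U t ^ 2 - U t * x t + x t ^ 2) =O[l] fun t => x t ^ 2 :=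
    (((hU.pow 2).sub ((hU.mul (isBigO_refl x l)).congr_right fun t => (sq (x t)).symm)).add
      (isBigO_refl _ _))
  have hx54 : (fun t => x t ^ 5) =O[l] fun t => x t ^ 4 :=
    ((isLittleO_pow_pow (𝕜 := 𝕜) (by norm_num : 4 < 5)).isBigO).comp_tendsto hx
  exact ((hsum.mul hquad).congr (fun t => by ring) fun t => by ring).trans hx54

theorem isBigO_comp_add_mul_pow_three_of_add_eq {h : 𝕜 → 𝕜} {c a : 𝕜} {U x : α → 𝕜}
    (hexp : (fun U => h U - c * U ^ 3) =O[𝓝 0] fun U => U ^ 4)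
    (hU : Tendsto U l (𝓝 0)) (hrel : ∀ᶠ t in l, U t + x t = a * h (U t)) :
    (fun t => h (U t) + c * x t ^ 3) =O[l] fun t => x t ^ 4 := by
  have hcube : (fun t => h (U t)) =O[l] fun t => U t ^ 3 :=
    (isBigO_pow_three_of_sub_mul_pow_three hexp).comp_tendsto hU
  have hsum_cube : (fun t => U t + x t) =O[l] fun t => U t ^ 3 :=
    (hcube.const_mul_left a).congr' (hrel.mono fun t ht => ht.symm) EventuallyEq.rfl
  -- `U + x = O(U³) = o(U)`, so `U` and `-x` are asymptotically equivalent.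
  have hUx : U =O[l] x := by
    have hsmall : (fun t => U t + x t) =o[l] U :=
      hsum_cube.trans_isLittleO ((isLittleO_pow_id (by norm_num : 1 < 3)).comp_tendsto hU)
    simpa using hsmall.neg_right.right_isBigO_add.of_neg_left
  have hx : Tendsto x l (𝓝 0) := by
    have hsum0 : Tendsto (fun t => U t + x t) l (𝓝 0) :=
      hsum_cube.trans_tendsto (by simpa using hU.pow 3)
    simpa using hsum0.sub hU
  have hsum : (fun t => U t + x t) =O[l] fun t => x t ^ 3 := hsum_cube.trans (hUx.pow 3)
  exact (((hexp.comp_tendsto hU).trans (hUx.pow 4)).add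
    ((isBigO_pow_three_add_pow_three hx hUx hsum).const_mul_left c)).congr_left
    fun t => by simp only [Function.comp_apply]; ring

end CubicGerm

theorem stmt_17_general (γ μ κ Pr d : ℝ) (hγ : 1 < γ) (hκ : 0 < κ)
    (hd : d = μ + κ * (γ - 1) ^ 2)
    (hPr : Pr = μ / (κ * (γ - 1)))
    (hPr2 : Pr = 2)
    (hc htc : ℝ → ℝ)
    (hexp : (fun U => hc U - (γ * (γ - 1) ^ 2 * κ / d ^ 2) * U ^ 3)
      =O[nhds 0] (fun U : ℝ => U ^ 4))
    (hcont : ContinuousAt htc (-1)) (hval : htc (-1) = 1)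
    (hinv : ∀ᶠ u in nhds (-1 : ℝ),
      ((1 - γ) * (u + 1) + (htc u - 1)) / d
        = hc ((μ * (u + 1) - κ * (1 - γ) * (htc u - 1)) / (-d))) :
    (fun u => htc u - (1 + (γ - 1) * (u + 1)
        - (γ * (γ - 1) / (Pr + γ - 1)) * (u + 1) ^ 3))
      =O[nhds (-1 : ℝ)] (fun u : ℝ => |u + 1| ^ 4) := by
  have hk : 0 < κ * (γ - 1) := mul_pos hκ (sub_pos.2 hγ)
  have hμ2 : μ = 2 * (κ * (γ - 1)) := by
    rw [hPr2, eq_div_iff hk.ne'] at hPr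
    linarith
  have hd2 : d = κ * (γ - 1) * (γ + 1) := by rw [hd, hμ2]; ring
  have hd0 : d ≠ 0 := by rw [hd2]; positivity
  set U : ℝ → ℝ := fun u => (μ * (u + 1) - κ * (1 - γ) * (htc u - 1)) / (-d)
  have hU : Tendsto U (𝓝 (-1)) (𝓝 0) := by
    have hUc : ContinuousAt U (-1) := by fun_prop
    simpa [U, hval] using hUc.tendsto
  have hrel : ∀ᶠ u in 𝓝 (-1), U u + (u + 1) = -(κ * (γ - 1)) * hc (U u) := by
    filter_upwards [hinv] with u hu
    rw [← hu]
    simp only [U, hμ2]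
    field_simp
    rw [hd2]
    ring
  have hcoef : d * (γ * (γ - 1) ^ 2 * κ / d ^ 2) = γ * (γ - 1) / (Pr + γ - 1) := by
    rw [hPr2, hd2, show (2 : ℝ) + γ - 1 = γ + 1 by ring]
    have hγ1 : γ + 1 ≠ 0 := by linarith
    field_simp
  have hkey := (isBigO_comp_add_mul_pow_three_of_add_eq hexp hU hrel).const_mul_left d
  refine (hkey.congr' ?_ EventuallyEq.rfl).congr_right fun u => (Even.pow_abs ⟨2, rfl⟩ _).symm
  filter_upwards [hinv] with u hu
  rw [← hu, ← hcoef]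
  field_simp
  ring

/-- third-order expansion of the center manifold in the original
coordinates when `P_r = 2`: its quadratic coefficient in `(u+1)` vanishes and
`θ = h̃ᶜ(u) = 1 + (γ-1)(u+1) - (γ(γ-1)/(P_r+γ-1))(u+1)³ + O(|u+1|⁴)`.
Here `h̃ᶜ` is related to the diagonalized center manifold `hᶜ` through the
linear change of variables `(U,Θ)ᵀ = P⁻¹(u+1, θ-1)ᵀ`,
`P = [[-1, κ(1-γ)],[1-γ, μ]]`, `det P = -d`, and `hᶜ(U) = c₃ U³ + O(U⁴)` with
`c₃ = γ(γ-1)²κ/d²`. -/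
theorem stmt_17 (γ μ κ Pr d : ℝ) (hγ : 1 < γ) (hμ : 0 < μ) (hκ : 0 < κ)
    (hd : d = μ + κ * (γ - 1) ^ 2)
    (hPr : Pr = μ / (κ * (γ - 1)))
    (hPr2 : Pr = 2)
    (hc htc : ℝ → ℝ)
    (hexp : (fun U => hc U - (γ * (γ - 1) ^ 2 * κ / d ^ 2) * U ^ 3)
      =O[nhds 0] (fun U : ℝ => U ^ 4))
    (hcont : ContinuousAt htc (-1)) (hval : htc (-1) = 1)
    (hinv : ∀ᶠ u in nhds (-1 : ℝ),
      ((1 - γ) * (u + 1) + (htc u - 1)) / d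
        = hc ((μ * (u + 1) - κ * (1 - γ) * (htc u - 1)) / (-d))) :
    (fun u => htc u - (1 + (γ - 1) * (u + 1)
        - (γ * (γ - 1) / (Pr + γ - 1)) * (u + 1) ^ 3))
      =O[nhds (-1 : ℝ)] (fun u : ℝ => |u + 1| ^ 4) :=
  stmt_17_general γ μ κ Pr d hγ hκ hd hPr hPr2 hc htc hexp hcont hval hinv
end
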